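/- arXiv:1811.07084 — 5 statements merged into one kernel-verified Lean document; each statement's English description precedes it below -/
import Mathlib

section
/- Let d, D ∈ ℕ, let C ⊆ ℝ^d be a compact set, and let (F_m)_{m ∈ ℕ} be a sequence of nonzero polynomials in ℂ[x_1, …, x_d], each of total degree at most D. Then there exist a strictly increasing sequence of indices m_1 < m_2 < … and a nonzero polynomial F ∈ ℂ[x_1, …, x_d] of total degree at most D such that the sequence of sets Z_C(F_{m_1}), Z_C(F_{m_2}), … converges to Z_C(F): for every ε > 0 there is K such that for all k ≥ K, every point of Z_C(F_{m_k}) has Euclidean distance less than ε to some point of Z_C(F). -/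
open MvPolynomial

namespace Stmt1Aux

variable (d D : ℕ)

abbrev T := {f : Fin d → Fin (D + 1) // ∑ i, (f i : ℕ) ≤ D}

noncomputable def e (f : T d D) : Fin d →₀ ℕ :=
  Finsupp.equivFunOnFinite.symm (fun i => (f.1 i : ℕ))

lemma e_apply (f : T d D) (i : Fin d) : e d D f i = f.1 i := rfl

lemma e_inj : Function.Injective (e d D) := by
  intro f g h
  ext i
  have := congrArg (fun s => (s : (Fin d →₀ ℕ)) i) h
  simpa [e_apply, Fin.val_injective.eq_iff] using this

noncomputable def Psi (c : T d D → ℂ) : MvPolynomial (Fin d) ℂ :=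
  ∑ f : T d D, monomial (e d D f) (c f)

lemma coeff_Psi (c : T d D → ℂ) (g : T d D) :
    coeff (e d D g) (Psi d D c) = c g := by
  unfold Psi
  rw [coeff_sum]
  rw [Finset.sum_eq_single g]
  · simp [coeff_monomial]
  · intro b _ hb
    rw [coeff_monomial, if_neg (fun h => hb (e_inj d D h))]
  · simp

lemma Psi_coeff (P : MvPolynomial (Fin d) ℂ) (hP : P.totalDegree ≤ D) :
    Psi d D (fun f => coeff (e d D f) P) = P := by
  apply MvPolynomial.ext
  intro s
  by_cases hs : ∃ g : T d D, e d D g = s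
  · obtain ⟨g, rfl⟩ := hs
    rw [coeff_Psi]
  · have hsupp : coeff s P = 0 := by
      by_contra h
      have hmem : s ∈ P.support := by simpa [mem_support_iff] using h
      have hsum : (s.sum fun _ e => e) ≤ D :=
        le_trans (MvPolynomial.le_totalDegree hmem) hP
      have hsum' : (∑ i, s i) ≤ D := by
        rwa [Finsupp.sum_fintype] at hsum
        intro i; rfl
      apply hs
      have hlt : ∀ i, s i < D + 1 := by
        intro i
        have : s i ≤ ∑ j, s j := Finset.single_le_sum (fun j _ => Nat.zero_le _) (Finset.mem_univ i)
        omega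
      refine ⟨⟨fun i => ⟨s i, hlt i⟩, by simpa using hsum'⟩, ?_⟩
      ext i
      rfl
    rw [hsupp]
    unfold Psi
    rw [coeff_sum]
    apply Finset.sum_eq_zero
    intro f _
    rw [coeff_monomial, if_neg (fun h => hs ⟨f, h⟩)]

lemma Psi_inj : Function.Injective (Psi d D) := by
  intro c c' h
  funext g
  rw [← coeff_Psi d D c g, ← coeff_Psi d D c' g, h]

lemma deg_Psi (c : T d D → ℂ) : (Psi d D c).totalDegree ≤ D := by
  unfold Psi
  refine le_trans (MvPolynomial.totalDegree_finset_sum _ _) ?_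
  apply Finset.sup_le
  intro f _
  refine le_trans (MvPolynomial.totalDegree_monomial_le _ _) ?_
  rw [Finsupp.sum_fintype]
  · simpa [e_apply] using f.2
  · intro i; rfl

noncomputable def E (c : T d D → ℂ) (x : EuclideanSpace ℝ (Fin d)) : ℂ :=
  ∑ f : T d D, c f * ∏ i, ((x i : ℝ) : ℂ) ^ (f.1 i : ℕ)

lemma eval_Psi (c : T d D → ℂ) (x : EuclideanSpace ℝ (Fin d)) :
    eval (fun i => ((x i : ℝ) : ℂ)) (Psi d D c) = E d D c x := by
  unfold Psi E
  rw [map_sum]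
  apply Finset.sum_congr rfl
  intro f _
  rw [eval_monomial]
  congr 1
  rw [Finsupp.prod_fintype]
  · apply Finset.prod_congr rfl
    intro i _
    rw [e_apply]
  · intro i; exact pow_zero _

lemma E_smul (a : ℂ) (c : T d D → ℂ) (x : EuclideanSpace ℝ (Fin d)) :
    E d D (a • c) x = a * E d D c x := by
  unfold E
  rw [Finset.mul_sum]
  apply Finset.sum_congr rfl
  intro f _
  simp [mul_assoc]

lemma E_cont : Continuous (fun p : (T d D → ℂ) × EuclideanSpace ℝ (Fin d) => E d D p.1 p.2) := by
  unfold E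
  apply continuous_finset_sum
  intro f _
  apply Continuous.mul
  · exact (continuous_apply f).comp continuous_fst
  · apply continuous_finset_prod
    intro i _
    exact (Complex.continuous_ofReal.comp ((EuclideanSpace.proj i).continuous.comp continuous_snd)).pow _

end Stmt1Aux
set_option maxHeartbeats 1000000 in
theorem stmt1 (d D : ℕ) (C : Set (EuclideanSpace ℝ (Fin d))) (hC : IsCompact C)
    (F : ℕ → MvPolynomial (Fin d) ℂ)
    (hF0 : ∀ m, F m ≠ 0) (hFdeg : ∀ m, (F m).totalDegree ≤ D) :
    ∃ m : ℕ → ℕ, StrictMono m ∧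
      ∃ G : MvPolynomial (Fin d) ℂ, G ≠ 0 ∧ G.totalDegree ≤ D ∧
        ∀ ε : ℝ, 0 < ε → ∃ K : ℕ, ∀ k ≥ K, ∀ x ∈ C,
          MvPolynomial.eval (fun i => ((x i : ℝ) : ℂ)) (F (m k)) = 0 →
            ∃ y ∈ C, MvPolynomial.eval (fun i => ((y i : ℝ) : ℂ)) G = 0 ∧ dist x y < ε := by
  classical
  open Stmt1Aux MvPolynomial in
  -- coefficient vectors
  set Φ : ℕ → (T d D → ℂ) := fun n f => coeff (e d D f) (F n) with hΦ
  have hΨΦ : ∀ n, Psi d D (Φ n) = F n := fun n => Psi_coeff d D (F n) (hFdeg n)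
  have hΦne : ∀ n, Φ n ≠ 0 := by
    intro n h
    apply hF0 n
    rw [← hΨΦ n, h]
    unfold Psi
    simp
  have hΦnorm : ∀ n, ‖Φ n‖ ≠ 0 := fun n => norm_ne_zero_iff.mpr (hΦne n)
  set c : ℕ → (T d D → ℂ) := fun n => (‖Φ n‖⁻¹ : ℂ) • Φ n with hc
  have hcs : ∀ n, c n ∈ Metric.sphere (0 : T d D → ℂ) 1 := by
    intro n
    rw [mem_sphere_zero_iff_norm]
    rw [hc]
    simp only [norm_smul]
    rw [norm_inv]
    simp only [Complex.norm_real, Real.norm_eq_abs, abs_norm]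
    exact inv_mul_cancel₀ (hΦnorm n)
  obtain ⟨w, hw, φ, hφ, hconv⟩ :=
    (isCompact_sphere (0 : T d D → ℂ) 1).tendsto_subseq hcs
  have hwne : w ≠ 0 := by
    intro h
    rw [mem_sphere_zero_iff_norm, h, norm_zero] at hw
    norm_num at hw
  refine ⟨φ, hφ, Psi d D w, ?_, deg_Psi d D w, ?_⟩
  · intro h
    apply hwne
    apply Psi_inj d D
    rw [h]
    unfold Psi
    simp
  intro ε hε
  by_contra hcon
  push_neg at hcon
  choose k hk x hxC hxz hfar using hcon
  obtain ⟨x₀, hx₀C, ψ, hψ, hxconv⟩ := hC.tendsto_subseq hxC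
  -- evaluation at moving points tends to E w x₀
  have hkψ : Filter.Tendsto (fun j => k (ψ j)) Filter.atTop Filter.atTop := by
    apply Filter.tendsto_atTop_mono (fun j => le_trans (hψ.le_apply) (hk (ψ j)))
    exact Filter.tendsto_id
  have hcconv : Filter.Tendsto (fun j => c (φ (k (ψ j)))) Filter.atTop (nhds w) :=
    hconv.comp hkψ
  have hpair : Filter.Tendsto (fun j => ((c (φ (k (ψ j)))), x (ψ j)))
      Filter.atTop (nhds (w, x₀)) := hcconv.prodMk_nhds hxconv
  have hEzero : ∀ j, E d D (c (φ (k (ψ j)))) (x (ψ j)) = 0 := by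
    intro j
    rw [hc]
    rw [E_smul]
    have : E d D (Φ (φ (k (ψ j)))) (x (ψ j)) = 0 := by
      rw [← eval_Psi, hΨΦ]
      exact hxz (ψ j)
    rw [this, mul_zero]
  have hE0 : E d D w x₀ = 0 := by
    have h1 := ((E_cont d D).tendsto (w, x₀)).comp hpair
    simp only [Function.comp_def] at h1
    exact tendsto_nhds_unique (h1.congr hEzero) tendsto_const_nhds
  have hG0 : MvPolynomial.eval (fun i => ((x₀ i : ℝ) : ℂ)) (Psi d D w) = 0 := by
    rw [eval_Psi]; exact hE0
  -- contradiction with dist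
  have hfar' : ∀ j, ε ≤ dist (x (ψ j)) x₀ := fun j => hfar (ψ j) x₀ hx₀C hG0
  rw [Metric.tendsto_atTop] at hxconv
  obtain ⟨N, hN⟩ := hxconv ε hε
  exact absurd (hN N le_rfl) (not_lt.mpr (hfar' N))
end

section
/- Let p be a prime, N ∈ ℕ, and let V be a finite-dimensional ℚ_p-linear subspace of the Tate algebra ℚ_p⟨z_1, …, z_N⟩ of restricted power series. Then there exists a constant c ∈ ℕ, depending only on V, such that every nonzero f ∈ V has Oesterlé degree at most c. Concretely: for every f ∈ V all of whose coefficients c_k satisfy |c_k|_p ≤ 1 and at least one of whose coefficients satisfies |c_k|_p = 1, one has |c_k|_p < 1 for every multi-index k of total degree |k| > c. -/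
open Filter Topology

/-!
The evaluation functionals separate the points of a finite-dimensional space `V` of functions, so
they span its dual; hence every linear functional on `V`, in particular every coordinate
functional of a basis, is bounded on the functions of sup-norm at most `1`. Writing `f ∈ V` in a
basis `g₁, …, gₙ` then bounds `‖f k‖` by a fixed combination of the `‖gᵢ k‖`, which tends to `0`
along the cofinite filter: uniformly on the unit ball of `V`, the values become small outside a
finite set of indices, and a finite set of multi-indices has bounded total degree.
-/

namespace Submodule

variable {𝕜 ι : Type*} [NormedField 𝕜] (V : Submodule 𝕜 (ι → 𝕜)) [FiniteDimensional 𝕜 V]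

theorem exists_norm_dual_apply_le (φ : Module.Dual 𝕜 V) :
    ∃ C : ℝ, ∀ f : V, (∀ j, ‖(f : ι → 𝕜) j‖ ≤ 1) → ‖φ f‖ ≤ C := by
  let ev : ι → Module.Dual 𝕜 V := fun j => (LinearMap.proj j).comp V.subtype
  have hspan : φ ∈ span 𝕜 (Set.range ev) := by
    refine FiniteDimensional.mem_span_of_iInf_ker_le_ker fun f hf => ?_
    have hf0 : f = 0 := Subtype.ext <| funext fun j => (mem_iInf _).1 hf j
    simp [hf0]
  induction hspan using span_induction with
  | mem _ hψ =>
    obtain ⟨j, rfl⟩ := hψ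
    exact ⟨1, fun f hf => hf j⟩
  | zero => exact ⟨0, fun _ _ => by simp⟩
  | add ψ χ _ _ hψ hχ =>
    obtain ⟨C, hC⟩ := hψ
    obtain ⟨D, hD⟩ := hχ
    exact ⟨C + D, fun f hf => (norm_add_le _ _).trans (add_le_add (hC f hf) (hD f hf))⟩
  | smul a ψ _ hψ =>
    obtain ⟨C, hC⟩ := hψ
    refine ⟨‖a‖ * C, fun f hf => ?_⟩
    rw [LinearMap.smul_apply, norm_smul]
    exact mul_le_mul_of_nonneg_left (hC f hf) (norm_nonneg a)

theorem eventually_cofinite_norm_apply_lt (hV : ∀ f ∈ V, Tendsto f cofinite (𝓝 0))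
    {ε : ℝ} (hε : 0 < ε) :
    ∀ᶠ k in cofinite, ∀ f ∈ V, (∀ j, ‖f j‖ ≤ 1) → ‖f k‖ < ε := by
  let g := Module.finBasis 𝕜 V
  choose C hC using fun i => V.exists_norm_dual_apply_le (g.coord i)
  have hsmall : Tendsto (fun k => ∑ i, C i * ‖(g i : ι → 𝕜) k‖) cofinite (𝓝 0) := by
    simpa using tendsto_finsetSum Finset.univ fun i _ =>
      ((hV _ (g i).2).norm.const_mul (C i))
  filter_upwards [hsmall.eventually (gt_mem_nhds hε)] with k hk f hf hf1
  have hrepr : f k = ∑ i, g.repr ⟨f, hf⟩ i * (g i : ι → 𝕜) k := by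
    have := congr_arg (fun v : V => (v : ι → 𝕜) k) (g.sum_repr ⟨f, hf⟩)
    simp only [coe_sum, coe_smul, Finset.sum_apply, Pi.smul_apply, smul_eq_mul] at this
    exact this.symm
  calc ‖f k‖ ≤ ∑ i, ‖g.repr ⟨f, hf⟩ i * (g i : ι → 𝕜) k‖ := hrepr ▸ norm_sum_le _ _
    _ ≤ ∑ i, C i * ‖(g i : ι → 𝕜) k‖ := by
      refine Finset.sum_le_sum fun i _ => ?_
      rw [norm_mul]
      exact mul_le_mul_of_nonneg_right (hC i ⟨f, hf⟩ hf1) (norm_nonneg _)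
    _ < ε := hk

end Submodule

theorem Filter.Eventually.exists_forall_of_lt {α : Type*} {P : α → Prop}
    (h : ∀ᶠ x in cofinite, P x) (d : α → ℕ) : ∃ c : ℕ, ∀ x, c < d x → P x := by
  obtain ⟨c, hc⟩ := ((eventually_cofinite.1 h).image d).bddAbove
  exact ⟨c, fun x hx => by_contra fun hPx => hx.not_ge (hc ⟨x, hPx, rfl⟩)⟩

theorem stmt3 (p : ℕ) [Fact p.Prime] (N : ℕ)
    (V : Submodule ℚ_[p] ((Fin N → ℕ) → ℚ_[p]))
    [FiniteDimensional ℚ_[p] V]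
    (hV : ∀ f ∈ V, Tendsto f cofinite (𝓝 0)) :
    ∃ c : ℕ, ∀ f ∈ V, (∀ k, ‖f k‖ ≤ 1) → (∃ k, ‖f k‖ = 1) →
      ∀ k : Fin N → ℕ, c < ∑ i, k i → ‖f k‖ < 1 := by
  obtain ⟨c, hc⟩ :=
    (V.eventually_cofinite_norm_apply_lt hV one_pos).exists_forall_of_lt fun k => ∑ i, k i
  exact ⟨c, fun f hf hf1 _ k hk => hc k hk f hf hf1⟩
end

section
/- Let V be a finite-dimensional ℚ_p-vector space with a nonarchimedean norm ‖·‖ whose nonzero values lie in p^ℤ, and let B = {v ∈ V : ‖v‖ = 1}. Let (c_n)_{n ∈ ℕ} be a sequence of ℚ_p-linear functionals c_n : V → ℚ_p with operator norm at most 1 (i.e. |c_n(v)|_p ≤ ‖v‖ for all v ∈ V), and assume that for every n there exists x_n ∈ B with |c_n(x_n)|_p = 1. Then there exists x ∈ B such that |c_n(x)|_p = 1 for infinitely many n. -/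
theorem stmt4 (p : ℕ) [Fact p.Prime]
    (V : Type*) [NormedAddCommGroup V] [NormedSpace ℚ_[p] V] [FiniteDimensional ℚ_[p] V]
    (hultra : ∀ u v : V, ‖u + v‖ ≤ max ‖u‖ ‖v‖)
    (hval : ∀ v : V, v ≠ 0 → ∃ m : ℤ, ‖v‖ = (p : ℝ) ^ m)
    (c : ℕ → V →ₗ[ℚ_[p]] ℚ_[p])
    (hc : ∀ n, ∀ v : V, ‖c n v‖ ≤ ‖v‖)
    (hx : ∀ n, ∃ x : V, ‖x‖ = 1 ∧ ‖c n x‖ = 1) :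
    ∃ x : V, ‖x‖ = 1 ∧ {n : ℕ | ‖c n x‖ = 1}.Infinite := by
  have : ProperSpace V := FiniteDimensional.proper ℚ_[p] V
  choose y hy1 hy2 using hx
  have hcpt : IsCompact (Metric.sphere (0 : V) 1) := isCompact_sphere 0 1
  obtain ⟨a, ha, φ, hφ, hlim⟩ := hcpt.tendsto_subseq (x := y)
    (fun n => by simpa [mem_sphere_iff_norm] using hy1 n)
  have ha1 : ‖a‖ = 1 := by simpa [mem_sphere_iff_norm] using ha
  refine ⟨a, ha1, ?_⟩
  have hlim' : Filter.Tendsto (fun k => ‖y (φ k) - a‖) Filter.atTop (nhds 0) := by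
    simpa using (tendsto_iff_norm_sub_tendsto_zero.mp hlim)
  obtain ⟨K, hK⟩ := Filter.tendsto_atTop'.mp hlim' (Set.Iio 1) (Iio_mem_nhds one_pos)
  have key : ∀ k ≥ K, ‖c (φ k) a‖ = 1 := by
    intro k hk
    have hlt : ‖c (φ k) (a - y (φ k))‖ < 1 := by
      calc ‖c (φ k) (a - y (φ k))‖ ≤ ‖a - y (φ k)‖ := hc _ _
        _ < 1 := by
          have := hK k hk
          simpa [norm_sub_rev] using this
    have hne : ‖c (φ k) (a - y (φ k))‖ ≠ ‖c (φ k) (y (φ k))‖ := by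
      rw [hy2]; exact ne_of_lt hlt
    have : ‖c (φ k) (a - y (φ k)) + c (φ k) (y (φ k))‖ =
        max ‖c (φ k) (a - y (φ k))‖ ‖c (φ k) (y (φ k))‖ := Padic.add_eq_max_of_ne hne
    rw [← map_add] at this
    simp only [sub_add_cancel] at this
    rw [this, hy2, max_eq_right hlt.le]
  have : {k : ℕ | k ≥ K} ⊆ φ ⁻¹' {n : ℕ | ‖c n a‖ = 1} := fun k hk => key k hk
  have hinf : (φ ⁻¹' {n : ℕ | ‖c n a‖ = 1}).Infinite :=
    (Set.Ici_infinite K).mono this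
  exact Set.Infinite.mono (Set.image_preimage_subset _ _)
    ((hinf.image (hφ.injective.injOn)) )
end

section
/- Let q ≥ 2 be a real number and let P : ℕ → ℕ satisfy the prime number theorem asymptotics: there is a constant c ≥ 0 with |P(n) − q^n/n| ≤ c·q^{n/2}/n for all n ≥ 1. Let a : ℕ → ℕ satisfy a(n) ≤ P(n) for all n ≥ 1, and let δ̄ = limsup_{s→1⁺} (−∑_{n ≥ 1} a(n)·q^{−ns}) / log(s−1) be the associated upper Dirichlet density. If δ̄ > 0, then there are infinitely many n ∈ ℕ with a(n) ≥ δ̄·P(n)/2. -/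
open Filter Topology

lemma aux_exp_le (u : ℝ) (h0 : 0 ≤ u) (h1 : u ≤ 1) : Real.exp (-u) ≤ 1 - u / 2 := by
  have h2 : u + 1 ≤ Real.exp u := Real.add_one_le_exp u
  have h4 : (0:ℝ) < u + 1 := by linarith
  have h5 : Real.exp (-u) ≤ (u + 1)⁻¹ := by
    rw [Real.exp_neg]
    exact inv_anti₀ h4 h2
  have h7 : (u+1) * (u+1)⁻¹ = 1 := mul_inv_cancel₀ (ne_of_gt h4)
  have h8 : (0:ℝ) ≤ (u+1)⁻¹ := by positivity
  nlinarith

set_option maxHeartbeats 1000000 in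
theorem stmt5 (q : ℝ) (hq : 2 ≤ q) (P a : ℕ → ℕ) (c : ℝ) (hc : 0 ≤ c)
    (hP : ∀ n : ℕ, 1 ≤ n → |(P n : ℝ) - q ^ (n : ℝ) / n| ≤ c * q ^ ((n : ℝ) / 2) / n)
    (ha : ∀ n : ℕ, 1 ≤ n → a n ≤ P n)
    (δ : ℝ)
    (hδ : δ = limsup (fun s : ℝ =>
        (-(∑' n : ℕ, (a (n + 1) : ℝ) * q ^ (-(((n : ℝ) + 1) * s)))) / Real.log (s - 1))
      (𝓝[>] 1))
    (hpos : 0 < δ) :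
    {n : ℕ | δ * (P n : ℝ) / 2 ≤ (a n : ℝ)}.Infinite := by
  by_contra hinf
  rw [Set.not_infinite] at hinf
  obtain ⟨N, hB⟩ := hinf.bddAbove
  have hN : ∀ n : ℕ, N < n → (a n : ℝ) ≤ δ * P n / 2 := by
    intro n hn
    by_contra h
    push_neg at h
    exact absurd (hB h.le) (not_le.mpr hn)
  have hq1 : (1:ℝ) < q := by linarith
  have hq0 : (0:ℝ) < q := by linarith
  set L := Real.log q with hLdef
  have hL : 0 < L := Real.log_pos hq1
  clear_value L
  set y : ℝ := q ^ (-(1/2 : ℝ)) with hy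
  have hy0 : 0 < y := Real.rpow_pos_of_pos hq0 _
  have hy1 : y < 1 := Real.rpow_lt_one_of_one_lt_of_neg hq1 (by norm_num)
  clear_value y
  have hsumy : Summable (fun n : ℕ => y ^ (n+1)) := by
    have := (summable_geometric_of_lt_one hy0.le hy1).mul_right y
    simpa [pow_succ] using this
  set Y : ℝ := ∑' n : ℕ, y ^ (n+1) with hYdef
  have hY0 : 0 ≤ Y := tsum_nonneg (fun n => pow_nonneg hy0.le _)
  clear_value Y
  set C₀ : ℝ := ∑ n ∈ Finset.range N, (P (n+1) : ℝ) with hC₀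
  have hC₀0 : 0 ≤ C₀ := Finset.sum_nonneg (fun i _ => Nat.cast_nonneg _)
  clear_value C₀
  set A : ℝ := C₀ + (δ/2) * (Real.log 2 - Real.log L) + (δ/2*c) * Y with hA
  clear_value A
  set A' : ℝ := max A 0 with hA'
  have hA'0 : 0 ≤ A' := by rw [hA']; exact le_max_right _ _
  have hAA : A ≤ A' := by rw [hA']; exact le_max_left _ _
  clear_value A'
  set M : ℝ := 4*(A'+1)/δ with hM
  have hM0 : 0 < M := by
    rw [hM]
    exact div_pos (by linarith only [hA'0]) hpos
  clear_value M
  set ε₀ : ℝ := min (min 1 (1/L)) (Real.exp (-M)) with hε₀def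
  have hε₀ : 0 < ε₀ := by
    rw [hε₀def]
    exact lt_min (lt_min one_pos (one_div_pos.mpr hL)) (Real.exp_pos _)
  have hε₀1 : ε₀ ≤ 1 := by
    rw [hε₀def]
    exact le_trans (min_le_left _ _) (min_le_left _ _)
  have hε₀L : ε₀ ≤ 1/L := by
    rw [hε₀def]
    exact le_trans (min_le_left _ _) (min_le_right _ _)
  have hε₀M : ε₀ ≤ Real.exp (-M) := by
    rw [hε₀def]
    exact min_le_right _ _
  clear_value ε₀
  set F : ℝ → ℝ := fun s : ℝ =>
        (-(∑' n : ℕ, (a (n + 1) : ℝ) * q ^ (-(((n : ℝ) + 1) * s)))) / Real.log (s - 1)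
    with hF
  clear_value F
  -- key estimate
  have key : ∀ s ∈ Set.Ioo (1:ℝ) (1+ε₀), F s ≤ 3*δ/4 := by
    rintro s ⟨hs1, hs2⟩
    have hd0 : 0 < s - 1 := by linarith only [hs1]
    have hd1 : s - 1 < 1 := by linarith only [hε₀1, hs2]
    set D : ℝ := -Real.log (s-1) with hD
    clear_value D
    have hDpos : 0 < D := by
      have h1 := Real.log_neg hd0 hd1
      rw [hD]
      linarith only [h1]
    have hDM : M < D := by
      have h1 : s - 1 < Real.exp (-M) := by linarith only [hε₀M, hs2]
      have h3 := Real.log_lt_log hd0 h1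
      rw [Real.log_exp] at h3
      rw [hD]
      linarith only [h3]
    set x : ℝ := q ^ (1 - s) with hx
    have hx0 : 0 < x := Real.rpow_pos_of_pos hq0 _
    have hx1 : x < 1 := Real.rpow_lt_one_of_one_lt_of_neg hq1 (by linarith only [hs1])
    clear_value x
    have hlog : HasSum (fun n : ℕ => x ^ (n+1) / ((n : ℝ)+1)) (-Real.log (1 - x)) :=
      Real.hasSum_pow_div_log_of_abs_lt_one (by rw [abs_of_pos hx0]; exact hx1)
    have hsumlog : Summable (fun n : ℕ => x ^ (n+1) / ((n : ℝ)+1)) := hlog.summable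
    set r : ℕ → ℝ := fun n => if n < N then (P (n+1) : ℝ) else 0 with hr
    have hsumr : Summable r := by
      apply summable_of_ne_finset_zero (s := Finset.range N)
      intro n hn
      simp only [Finset.mem_range] at hn
      simp [hr, hn]
    set g : ℕ → ℝ := fun n =>
      r n + (δ/2) * (x^(n+1)/((n:ℝ)+1)) + (δ/2*c) * y^(n+1) with hg
    have hsumg : Summable g := (hsumr.add (hsumlog.mul_left (δ/2))).add
      (hsumy.mul_left (δ/2*c))
    -- pointwise bound
    have hterm : ∀ n : ℕ, (a (n+1):ℝ) * q ^ (-(((n:ℝ)+1)*s)) ≤ g n := by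
      intro n
      set m : ℝ := (n:ℝ) + 1 with hm
      have hm1 : (1:ℝ) ≤ m := by
        have h0 : (0:ℝ) ≤ (n:ℝ) := Nat.cast_nonneg n
        rw [hm]
        linarith only [h0]
      clear_value m
      have hm0 : (0:ℝ) < m := by linarith only [hm1]
      have he0 : (0:ℝ) < q ^ (-(m*s)) := Real.rpow_pos_of_pos hq0 _
      have he1 : q ^ (-(m*s)) ≤ 1 :=
        Real.rpow_le_one_of_one_le_of_nonpos hq1.le
          (neg_nonpos.mpr (mul_nonneg hm0.le (by linarith only [hs1] : (0:ℝ) ≤ s)))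
      have hxe : q ^ (m:ℝ) * q ^ (-(m*s)) = x ^ (n+1) := by
        rw [← Real.rpow_natCast x (n+1), hx, ← Real.rpow_add hq0,
          ← Real.rpow_mul hq0.le]
        congr 1
        push_cast [hm]
        ring
      have hye : q ^ (m/2) * q ^ (-(m*s)) ≤ y ^ (n+1) := by
        rw [← Real.rpow_natCast y (n+1), hy, ← Real.rpow_add hq0,
          ← Real.rpow_mul hq0.le]
        apply Real.rpow_le_rpow_of_exponent_le hq1.le
        have hc1 : ((n+1:ℕ):ℝ) = m := by push_cast [hm]; ring
        rw [hc1]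
        have hp1 : 0 ≤ m*(s-1) := mul_nonneg hm0.le (by linarith only [hs1])
        have hp2 : m*(s-1) = m*s - m := by ring
        linarith only [hp1, hp2, hm1]
      by_cases hcase : n < N
      · have h1 : (a (n+1) : ℝ) ≤ (P (n+1) : ℝ) := by
          exact_mod_cast ha (n+1) (by omega)
        have h2 : (a (n+1):ℝ) * q ^ (-(m*s)) ≤ (P (n+1):ℝ) := by
          calc (a (n+1):ℝ) * q ^ (-(m*s)) ≤ (P (n+1):ℝ) * 1 :=
                mul_le_mul h1 he1 he0.le (Nat.cast_nonneg _)
            _ = _ := mul_one _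
        have t1 : 0 ≤ (δ/2) * (x^(n+1)/((n:ℝ)+1)) := by positivity
        have t2 : 0 ≤ (δ/2*c) * y^(n+1) := by positivity
        simp only [hg, hr, if_pos hcase]
        linarith only [h2, t1, t2]
      · push_neg at hcase
        have h1 : (a (n+1) : ℝ) ≤ δ * (P (n+1) : ℝ) / 2 := hN (n+1) (by omega)
        have hPn := hP (n+1) (by omega)
        have hcast : ((n+1 : ℕ) : ℝ) = m := by push_cast [hm]; ring
        rw [hcast] at hPn
        have h2 : (P (n+1) : ℝ) ≤ q ^ (m:ℝ) / m + c * q ^ (m/2) / m := by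
          have h2a := (abs_le.mp hPn).2
          linarith only [h2a]
        have h3 : (a (n+1):ℝ) * q^(-(m*s)) ≤
            (δ/2) * ((q^(m:ℝ)/m + c*q^(m/2)/m) * q^(-(m*s))) := by
          have hstep : (a (n+1):ℝ) ≤ (δ/2) * (q^(m:ℝ)/m + c*q^(m/2)/m) := by
            have hmul := mul_le_mul_of_nonneg_left h2 (by positivity : (0:ℝ) ≤ δ/2)
            calc (a (n+1):ℝ) ≤ δ * (P (n+1):ℝ)/2 := h1
              _ = (δ/2) * (P (n+1):ℝ) := by ring
              _ ≤ _ := hmul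
          calc (a (n+1):ℝ) * q^(-(m*s))
              ≤ ((δ/2) * (q^(m:ℝ)/m + c*q^(m/2)/m)) * q^(-(m*s)) :=
                mul_le_mul_of_nonneg_right hstep he0.le
            _ = _ := by ring
        have e1 : q^(m:ℝ)/m * q^(-(m*s)) = x^(n+1)/m := by
          rw [div_mul_eq_mul_div, hxe]
        have e2 : c * q ^ (m/2) / m * q^(-(m*s)) ≤ c * y^(n+1) := by
          have step : c * (q ^ (m/2) * q^(-(m*s))) / m ≤ c * y^(n+1) / 1 := by
            gcongr
          calc c * q ^ (m/2) / m * q^(-(m*s))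
              = c * (q ^ (m/2) * q^(-(m*s))) / m := by ring
            _ ≤ c * y^(n+1) / 1 := step
            _ = c * y^(n+1) := by ring
        have h4 : (q^(m:ℝ)/m + c*q^(m/2)/m) * q^(-(m*s)) ≤ x^(n+1)/m + c * y^(n+1) := by
          have expand : (q^(m:ℝ)/m + c*q^(m/2)/m) * q^(-(m*s))
              = q^(m:ℝ)/m * q^(-(m*s)) + c*q^(m/2)/m * q^(-(m*s)) := by ring
          rw [expand, e1]
          linarith only [e2]
        have hr0 : r n = 0 := by simp [hr, not_lt.mpr hcase]
        have hmm : ((n:ℝ)+1) = m := hm.symm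
        simp only [hg, hr0, hmm, zero_add]
        have h5 : (δ/2) * ((q^(m:ℝ)/m + c*q^(m/2)/m) * q^(-(m*s)))
            ≤ (δ/2) * (x^(n+1)/m + c * y^(n+1)) :=
          mul_le_mul_of_nonneg_left h4 (by positivity)
        calc (a (n+1):ℝ) * q^(-(m*s)) ≤ (δ/2) * (x^(n+1)/m + c * y^(n+1)) :=
              le_trans h3 h5
          _ = (δ/2) * (x^(n+1)/m) + (δ/2*c) * y^(n+1) := by ring
    have htermnn : ∀ n : ℕ, 0 ≤ (a (n+1):ℝ) * q ^ (-(((n:ℝ)+1)*s)) :=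
      fun n => mul_nonneg (Nat.cast_nonneg _) (Real.rpow_pos_of_pos hq0 _).le
    set T : ℝ := ∑' n : ℕ, (a (n+1):ℝ) * q ^ (-(((n:ℝ)+1)*s)) with hT
    have hsumt : Summable (fun n : ℕ => (a (n+1):ℝ) * q ^ (-(((n:ℝ)+1)*s))) :=
      Summable.of_nonneg_of_le htermnn hterm hsumg
    have hTg : T ≤ ∑' n, g n := by
      rw [hT]
      exact Summable.tsum_le_tsum hterm hsumt hsumg
    have hT0 : 0 ≤ T := by
      rw [hT]
      exact tsum_nonneg htermnn
    clear_value T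
    have htsumg : ∑' n, g n =
        (∑' n, r n) + (δ/2) * (∑' n : ℕ, x^(n+1)/((n:ℝ)+1)) + (δ/2*c) * Y := by
      rw [hg]
      rw [Summable.tsum_add (hsumr.add (hsumlog.mul_left (δ/2))) (hsumy.mul_left (δ/2*c)),
        Summable.tsum_add hsumr (hsumlog.mul_left (δ/2)), tsum_mul_left, tsum_mul_left, hYdef]
    have htr : ∑' n, r n ≤ C₀ := by
      rw [tsum_eq_sum (s := Finset.range N) (by
        intro n hn
        simp only [Finset.mem_range] at hn
        simp [hr, hn])]
      rw [hC₀]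
      apply Finset.sum_le_sum
      intro i hi
      simp only [Finset.mem_range] at hi
      simp [hr, hi]
    have htx : ∑' n : ℕ, x^(n+1)/((n:ℝ)+1) = -Real.log (1 - x) := hlog.tsum_eq
    -- log bound
    set u : ℝ := (s-1)*L with hu
    have hu0 : 0 < u := by
      rw [hu]
      exact mul_pos hd0 hL
    clear_value u
    have hu1 : u ≤ 1 := by
      have h1 : s - 1 ≤ 1/L := by linarith only [hε₀L, hs2]
      calc u = (s-1)*L := hu
        _ ≤ (1/L)*L := mul_le_mul_of_nonneg_right h1 hL.le
        _ = 1 := by field_simp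
    have hxexp : x = Real.exp (-u) := by
      rw [hx, Real.rpow_def_of_pos hq0, hu, hLdef]
      congr 1
      ring
    have hx2 : x ≤ 1 - u/2 := by
      rw [hxexp]; exact aux_exp_le u hu0.le hu1
    have h1x : u/2 ≤ 1 - x := by linarith only [hx2]
    have hu2 : (0:ℝ) < u/2 := by linarith only [hu0]
    have hlogb : -Real.log (1-x) ≤ D + (Real.log 2 - Real.log L) := by
      have hlog1 : Real.log (u/2) ≤ Real.log (1-x) := Real.log_le_log hu2 h1x
      have hlog2 : Real.log (u/2) = Real.log (s-1) + Real.log L - Real.log 2 := by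
        rw [Real.log_div (ne_of_gt hu0) two_ne_zero, hu,
          Real.log_mul (ne_of_gt hd0) (ne_of_gt hL)]
      rw [hD]
      linarith only [hlog1, hlog2]
    have hTbound : T ≤ A' + (δ/2) * D := by
      have h6 : (δ/2) * (∑' n : ℕ, x^(n+1)/((n:ℝ)+1)) ≤
          (δ/2) * (D + (Real.log 2 - Real.log L)) := by
        rw [htx]
        exact mul_le_mul_of_nonneg_left hlogb (by positivity)
      have hexp : (δ/2) * (D + (Real.log 2 - Real.log L))
          = (δ/2)*D + (δ/2)*(Real.log 2 - Real.log L) := by ring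
      have hTg2 := hTg
      rw [htsumg] at hTg2
      linarith only [hTg2, htr, h6, hAA, hA, hexp]
    have hFeq : F s = T / D := by
      simp only [hF, hT, hD]
      rw [div_neg, neg_div]
    rw [hFeq]
    have hstep : T / D ≤ (A' + (δ/2)*D) / D :=
      (div_le_div_iff_of_pos_right hDpos).mpr hTbound
    have hDne : D ≠ 0 := ne_of_gt hDpos
    have heq : (A' + (δ/2)*D) / D = A'/D + δ/2 := by
      rw [add_div, mul_div_assoc, div_self hDne, mul_one]
    have hA'D : A'/D ≤ δ/4 := by
      rw [div_le_iff₀ hDpos]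
      have hMδ : δ * M = 4*(A'+1) := by
        rw [hM]
        field_simp
      have hmul : δ * M < δ * D := mul_lt_mul_of_pos_left hDM hpos
      have hh : 4*(δ/4*D) = δ*D := by ring
      linarith only [hMδ, hmul, hh, hA'0]
    rw [heq] at hstep
    linarith only [hstep, hA'D]
  have hub : ∀ᶠ s in 𝓝[>] (1:ℝ), F s ≤ 3*δ/4 := by
    filter_upwards [Ioo_mem_nhdsGT_of_mem
      (Set.left_mem_Ico.mpr (by linarith only [hε₀] : (1:ℝ) < 1 + ε₀))] with s hs
    exact key s hs
  have hlb : ∀ᶠ s in 𝓝[>] (1:ℝ), (0:ℝ) ≤ F s := by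
    filter_upwards [Ioo_mem_nhdsGT_of_mem
      (Set.left_mem_Ico.mpr (by norm_num : (1:ℝ) < 2))] with s hs
    have hT0 : 0 ≤ ∑' n : ℕ, (a (n+1):ℝ) * q ^ (-(((n:ℝ)+1)*s)) :=
      tsum_nonneg fun n => mul_nonneg (Nat.cast_nonneg _) (Real.rpow_pos_of_pos hq0 _).le
    have hlogneg : Real.log (s-1) < 0 :=
      Real.log_neg (by linarith only [hs.1]) (by linarith only [hs.2])
    simp only [hF]
    exact div_nonneg_of_nonpos (by linarith only [hT0]) hlogneg.le
  have hlim : limsup F (𝓝[>] (1:ℝ)) ≤ 3*δ/4 :=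
    limsup_le_of_le (isCoboundedUnder_le_of_eventually_le _ hlb) hub
  rw [← hδ] at hlim
  linarith only [hlim, hpos]
end

section
/- Let G be a group, K ⊆ G a subgroup and E ⊆ G a subset such that the multiplication map E × K → G, (e, k) ↦ e·k, is a bijection and k·E·k⁻¹ = E for every k ∈ K. If two elements x, y ∈ K are conjugate in G (there is a ∈ G with a·x·a⁻¹ = y), then they are already conjugate in K (there is c ∈ K with c·x·c⁻¹ = y). -/
theorem stmt8 {G : Type*} [Group G] (K : Subgroup G) (E : Set G)
    (hbij : Function.Bijective fun p : E × K => (p.1 : G) * (p.2 : G))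
    (hconj : ∀ k ∈ K, (fun x => k * x * k⁻¹) '' E = E)
    (x y : G) (hx : x ∈ K) (hy : y ∈ K)
    (a : G) (ha : a * x * a⁻¹ = y) :
    ∃ c ∈ K, c * x * c⁻¹ = y := by
  obtain ⟨⟨⟨e, heE⟩, ⟨k, hkK⟩⟩, hek⟩ := hbij.2 a
  simp only at hek
  have he' : y * e * y⁻¹ ∈ E := by
    rw [← hconj y hy]; exact ⟨e, heE, rfl⟩
  have hk1 : k * x * k⁻¹ * k ∈ K :=
    mul_mem (mul_mem (mul_mem hkK hx) (inv_mem hkK)) hkK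
  have hk2 : y * k ∈ K := mul_mem hy hkK
  have key : (fun p : E × K => (p.1 : G) * (p.2 : G))
      (⟨e, heE⟩, ⟨k * x * k⁻¹ * k, hk1⟩) =
      (fun p : E × K => (p.1 : G) * (p.2 : G))
      (⟨y * e * y⁻¹, he'⟩, ⟨y * k, hk2⟩) := by
    simp only
    subst ha hek
    group
  have := hbij.1 key
  have h2 : k * x * k⁻¹ * k = y * k := by
    have := congrArg (fun p : E × K => (p.2 : G)) this
    simpa using this
  refine ⟨k, hkK, ?_⟩
  have := mul_right_cancel h2
  exact this
end
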